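/- arXiv:2311.07679 — 2 statements merged into one kernel-verified Lean document; each statement's English description precedes it below -/
import Mathlib

section
/- If the Smith normal form of the r×n integer matrix H_X has diagonal entries d₁, ..., d_r, and H_Z is an integer matrix with full row rank r_Z satisfying H_Z H_Xᵀ = 0 and ker(H_Zᵀ)/im(H_Xᵀ) well-defined, then the quotient group ker(H_Zᵀ : ℤⁿ → ℤ^{r_Z}) / im(H_Xᵀ : ℤ^r → ℤⁿ) is isomorphic to (⊕ᵢ ℤ_{dᵢ}) ⊕ ℤ^{n - r - r_Z}. -/
open Matrix

/-- `D` is a Smith normal form of the `r × n` integer matrix `H`. -/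
def IsSmithNormalFormOf {r n : ℕ} (D H : Matrix (Fin r) (Fin n) ℤ) : Prop :=
  (∃ U U' : Matrix (Fin r) (Fin r) ℤ, ∃ V V' : Matrix (Fin n) (Fin n) ℤ,
      U * U' = 1 ∧ U' * U = 1 ∧ V * V' = 1 ∧ V' * V = 1 ∧ U * H * V = D) ∧
  (∀ (i : Fin r) (j : Fin n), (i : ℕ) ≠ (j : ℕ) → D i j = 0) ∧
  (∀ (i : Fin r) (j : Fin n), (i : ℕ) = (j : ℕ) → 0 ≤ D i j) ∧
  (∀ (i i' : Fin r) (j j' : Fin n), (i : ℕ) = (j : ℕ) → (i' : ℕ) = (j' : ℕ) →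
      (i : ℕ) + 1 = (i' : ℕ) → D i j ∣ D i' j')

/-!
There are unimodular `P`, `Q` with `P H_Xᵀ Q = (diag d; 0)` (the transposed Smith form, with the
coordinates of `ℤⁿ` split as `ℤ^r ⊕ ℤ^{n-r}`). Conjugating the complex by `P` replaces `H_Z` by
`K = H_Z P⁻¹`, and `K (diag d; 0) = 0` with every `dᵢ ≠ 0` forces the first `r` columns of `K` to
vanish: `K = (0 | K₂)`. The homology then splits as `ℤ^r / diag d × ker K₂ ≅ ⊕ ℤ_{dᵢ} × ker K₂`,
and `ker K₂` is free of rank `(n - r) - r_Z` because `K₂` still has full row rank.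
-/

section KerModRange

variable {R L L' M M' N N' M₁ M₂ : Type*} [Ring R] [AddCommGroup L] [Module R L]
  [AddCommGroup L'] [Module R L'] [AddCommGroup M] [Module R M] [AddCommGroup M'] [Module R M']
  [AddCommGroup N] [Module R N] [AddCommGroup N'] [Module R N'] [AddCommGroup M₁] [Module R M₁]
  [AddCommGroup M₂] [Module R M₂]

/-- `ker g ⧸ (range f ⊓ ker g)`: the homology at `M` of `L → M → N` when `g ∘ₗ f = 0`. -/
abbrev kerModRange (f : L →ₗ[R] M) (g : M →ₗ[R] N) : Type _ :=
  LinearMap.ker g ⧸ (LinearMap.range f).comap (LinearMap.ker g).subtype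

def kerModRange.congr (e : M ≃ₗ[R] M') {f : L →ₗ[R] M} {g : M →ₗ[R] N} {f' : L' →ₗ[R] M'}
    {g' : M' →ₗ[R] N'} (hf : LinearMap.range f' = (LinearMap.range f).map (e : M →ₗ[R] M'))
    (hg : LinearMap.ker g' = (LinearMap.ker g).map (e : M →ₗ[R] M')) :
    kerModRange f g ≃ₗ[R] kerModRange f' g' :=
  Submodule.Quotient.equiv _ _ (e.ofSubmodules _ _ hg.symm) <| by
    ext ⟨y, hy⟩
    rw [Submodule.map_equiv_eq_comap_symm]
    simp [hf]

noncomputable def kerModRange.inlSndEquiv (f : L →ₗ[R] M₁) (g : M₂ →ₗ[R] N) :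
    kerModRange (LinearMap.inl R M₁ M₂ ∘ₗ f) (g ∘ₗ LinearMap.snd R M₁ M₂) ≃ₗ[R]
      (M₁ ⧸ LinearMap.range f) × LinearMap.ker g :=
  let F : LinearMap.ker (g ∘ₗ LinearMap.snd R M₁ M₂) →ₗ[R]
      (M₁ ⧸ LinearMap.range f) × LinearMap.ker g :=
    LinearMap.prod ((LinearMap.range f).mkQ ∘ₗ LinearMap.fst R M₁ M₂ ∘ₗ Submodule.subtype _)
      (LinearMap.codRestrict _ (LinearMap.snd R M₁ M₂ ∘ₗ Submodule.subtype _) fun x => x.2)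
  have hker : LinearMap.ker F = _ := by
    ext ⟨⟨a, b⟩, hab⟩
    simp only [F, LinearMap.ker_prod, Submodule.mem_inf, LinearMap.mem_ker, LinearMap.coe_comp,
      LinearMap.coe_fst, Submodule.coe_subtype, Function.comp_apply, Submodule.mkQ_apply,
      Submodule.Quotient.mk_eq_zero, LinearMap.mem_range, Submodule.mem_comap,
      Submodule.subtype_apply, LinearMap.coe_inl, Prod.mk.injEq, exists_and_right,
      and_congr_right_iff, forall_exists_index]
    exact fun _ _ => ⟨fun h => (congrArg Subtype.val h).symm, fun h => Subtype.ext h.symm⟩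
  have hsurj : Function.Surjective F := by
    rintro ⟨a, b, hb⟩
    obtain ⟨a, rfl⟩ := Submodule.mkQ_surjective _ a
    exact ⟨⟨(a, b), hb⟩, rfl⟩
  (Submodule.quotEquivOfEq _ _ hker.symm).trans (F.quotKerEquivOfSurjective hsurj)

end KerModRange

section MatrixKerModRange

variable {R l l' m n n' ι κ : Type*} [CommRing R] [Fintype l] [Fintype l'] [Fintype n]
  [Fintype n'] [Fintype ι] [Fintype κ] [DecidableEq l] [DecidableEq n] [DecidableEq n']

noncomputable def Matrix.kerModRangeCongr {A : Matrix n l R} {B : Matrix m n R}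
    {P : Matrix n' n R} {P' : Matrix n n' R} (hPP' : P * P' = 1) (hP'P : P' * P = 1)
    {Q : Matrix l l' R} {Q' : Matrix l' l R} (hQ : Q * Q' = 1) {A' : Matrix n' l' R}
    {B' : Matrix m n' R} (hA' : P * A * Q = A') (hB' : B * P' = B') :
    kerModRange A.mulVecLin B.mulVecLin ≃ₗ[R] kerModRange A'.mulVecLin B'.mulVecLin :=
  let e : (n → R) ≃ₗ[R] (n' → R) := LinearEquiv.ofLinearMap P.mulVecLin P'.mulVecLin
    (by rw [← mulVecLin_mul, hPP', mulVecLin_one]) (by rw [← mulVecLin_mul, hP'P, mulVecLin_one])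
  have hQtop : LinearMap.range Q.mulVecLin = ⊤ := LinearMap.range_eq_top.2 fun x =>
    ⟨Q' *ᵥ x, by rw [mulVecLin_apply, mulVec_mulVec, hQ, one_mulVec]⟩
  kerModRange.congr e
    (by rw [← hA', mulVecLin_mul, LinearMap.range_comp_of_range_eq_top _ hQtop, mulVecLin_mul,
      LinearMap.range_comp]; rfl)
    (by
      rw [← hB', mulVecLin_mul, LinearMap.ker_comp]
      exact Submodule.comap_equiv_eq_map_symm e.symm _)

noncomputable def Matrix.kerModRangeFromRowsFromColsEquiv (A : Matrix ι l R) (B : Matrix m κ R) :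
    kerModRange (fromRows A (0 : Matrix κ l R)).mulVecLin (fromCols (0 : Matrix m ι R) B).mulVecLin
      ≃ₗ[R] ((ι → R) ⧸ LinearMap.range A.mulVecLin) × LinearMap.ker B.mulVecLin :=
  let e := LinearEquiv.sumArrowLequivProdArrow ι κ R R
  have hf : (e : (ι ⊕ κ → R) →ₗ[R] _) ∘ₗ (fromRows A 0).mulVecLin =
      LinearMap.inl R (ι → R) (κ → R) ∘ₗ A.mulVecLin :=
    LinearMap.ext fun x => Prod.ext (funext fun i => by simp [e, fromRows_mulVec])
      (funext fun j => by simp [e, fromRows_mulVec])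
  have hg : (fromCols 0 B).mulVecLin =
      (B.mulVecLin ∘ₗ LinearMap.snd R (ι → R) (κ → R)) ∘ₗ (e : (ι ⊕ κ → R) →ₗ[R] _) :=
    LinearMap.ext fun x => by rw [mulVecLin_apply, fromCols_mulVec, zero_mulVec, zero_add]; rfl
  (kerModRange.congr e (by rw [← hf, LinearMap.range_comp])
    (by rw [hg, LinearMap.ker_comp _ (B.mulVecLin ∘ₗ _),
      Submodule.map_comap_eq_of_surjective e.surjective])).trans
    (kerModRange.inlSndEquiv _ _)

end MatrixKerModRange

noncomputable def quotientRangeDiagonalEquivPiZMod {ι : Type*} [Fintype ι] [DecidableEq ι]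
    (d : ι → ℕ) :
    ((ι → ℤ) ⧸ LinearMap.range (diagonal fun i => (d i : ℤ)).mulVecLin) ≃ₗ[ℤ]
      ((i : ι) → ZMod (d i)) :=
  let F : (ι → ℤ) →ₗ[ℤ] ((i : ι) → ZMod (d i)) :=
    LinearMap.pi fun i => (Int.castAddHom (ZMod (d i))).toIntLinearMap ∘ₗ LinearMap.proj i
  have hker : LinearMap.ker F = LinearMap.range (diagonal fun i => (d i : ℤ)).mulVecLin := by
    ext x
    simp [F, funext_iff, ZMod.intCast_zmod_eq_zero_iff_dvd, Dvd.dvd, mulVec_diagonal,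
      Classical.skolem, eq_comm]
  have hsurj : Function.Surjective F := fun y => by
    choose a ha using fun i => ZMod.intCast_surjective (y i)
    exact ⟨a, funext ha⟩
  (Submodule.quotEquivOfEq _ _ hker.symm).trans (F.quotKerEquivOfSurjective hsurj)

section FullRowRank

variable {R m n : Type*} [CommRing R] [LinearOrder R] [IsStrictOrderedRing R] [Fintype m]
  [Fintype n]

theorem Matrix.det_mul_transpose_ne_zero_of_injective_vecMul [DecidableEq m] {A : Matrix m n R}
    (hA : Function.Injective fun v : m → R => v ᵥ* A) : (A * Aᵀ).det ≠ 0 := by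
  intro hdet
  obtain ⟨v, hv, hAv⟩ := exists_mulVec_eq_zero_iff.2 hdet
  have hsq : (v ᵥ* A) ⬝ᵥ (v ᵥ* A) = 0 := calc
    _ = v ⬝ᵥ (A *ᵥ (Aᵀ *ᵥ v)) := by rw [dotProduct_mulVec, mulVec_transpose]
    _ = 0 := by rw [mulVec_mulVec, hAv, dotProduct_zero]
  exact hv (hA (by simpa using dotProduct_self_eq_zero.1 hsq))

theorem Matrix.rank_eq_card_of_injective_vecMul {A : Matrix m n R}
    (hA : Function.Injective fun v : m → R => v ᵥ* A) : A.rank = Fintype.card m := by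
  classical
  exact le_antisymm A.rank_le_card_height <|
    (rank_of_det_ne_zero (det_mul_transpose_ne_zero_of_injective_vecMul hA)).symm.trans_le
      (A.rank_mul_le_left _)

theorem Matrix.finrank_ker_mulVecLin_of_injective_vecMul {A : Matrix m n R}
    (hA : Function.Injective fun v : m → R => v ᵥ* A) :
    Module.finrank R (LinearMap.ker A.mulVecLin) = Fintype.card n - Fintype.card m := by
  have := (LinearMap.ker A.mulVecLin).finrank_quotient_add_finrank
  rw [A.mulVecLin.quotKerEquivRange.finrank_eq, ← Matrix.rank,
    rank_eq_card_of_injective_vecMul hA, Module.finrank_fintype_fun_eq_card] at this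
  omega

end FullRowRank

noncomputable def Matrix.kerMulVecLinEquivOfInjectiveVecMul {p q : ℕ}
    {A : Matrix (Fin p) (Fin q) ℤ} (hA : Function.Injective fun v : Fin p → ℤ => v ᵥ* A) :
    LinearMap.ker A.mulVecLin ≃ₗ[ℤ] (Fin (q - p) → ℤ) :=
  LinearEquiv.ofFinrankEq _ _ <| by simp [finrank_ker_mulVecLin_of_injective_vecMul hA]

theorem Matrix.eq_fromCols_zero_of_mul_fromRows_diagonal_eq_zero {R m ι κ : Type*} [Semiring R]
    [NoZeroDivisors R] [Fintype ι] [Fintype κ] [DecidableEq ι] {d : ι → R} (hd : ∀ i, d i ≠ 0)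
    {K : Matrix m (ι ⊕ κ) R} (hK : K * fromRows (diagonal d) (0 : Matrix κ ι R) = 0) :
    K = fromCols 0 K.toCols₂ := by
  rw [← fromCols_toCols K, fromCols_mul_fromRows, Matrix.mul_zero, add_zero] at hK
  conv_lhs => rw [← fromCols_toCols K]
  congr 1
  ext i j
  simpa [hd j] using congrFun (congrFun hK i) j

theorem Matrix.injective_vecMul_of_injective_vecMul_fromCols_zero {R m ι κ : Type*} [Semiring R]
    [Fintype m] {B : Matrix m κ R}
    (hB : Function.Injective fun v : m → R => v ᵥ* fromCols (0 : Matrix m ι R) B) :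
    Function.Injective fun v : m → R => v ᵥ* B := fun v w h => hB <| by
  simp only [vecMul_fromCols, vecMul_zero] at h ⊢
  rw [h]

theorem Matrix.injective_vecMul_mul {R m n n' : Type*} [Semiring R] [Fintype m] [Fintype n]
    [Fintype n'] [DecidableEq n] {B : Matrix m n R}
    (hB : Function.Injective fun v : m → R => v ᵥ* B) {P' : Matrix n n' R} {P : Matrix n' n R}
    (h : P' * P = 1) : Function.Injective fun v : m → R => v ᵥ* (B * P') := fun v w hvw => hB <| by
  simpa [← vecMul_vecMul, vecMul_vecMul _ P', h, vecMul_one] using congrArg (· ᵥ* P) hvw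

def finSumFinSubEquiv {r n : ℕ} (h : r ≤ n) : Fin r ⊕ Fin (n - r) ≃ Fin n :=
  finSumFinEquiv.trans (finCongr (Nat.add_sub_cancel' h))

@[simp] theorem finSumFinSubEquiv_inl {r n : ℕ} (h : r ≤ n) (i : Fin r) :
    finSumFinSubEquiv h (Sum.inl i) = Fin.castLE h i := rfl

@[simp] theorem finSumFinSubEquiv_inr_val {r n : ℕ} (h : r ≤ n) (j : Fin (n - r)) :
    (finSumFinSubEquiv h (Sum.inr j) : ℕ) = r + j := rfl

theorem Matrix.transpose_submatrix_finSumFinSubEquiv {R : Type*} [Zero R] {r n : ℕ} (h : r ≤ n)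
    {D : Matrix (Fin r) (Fin n) R} (hoff : ∀ (i : Fin r) (j : Fin n), (i : ℕ) ≠ j → D i j = 0) :
    Dᵀ.submatrix (finSumFinSubEquiv h) id =
      fromRows (diagonal fun i => D i (Fin.castLE h i)) 0 := by
  ext (i | j) k
  · by_cases hik : i = k
    · subst hik; simp
    · simp [diagonal_apply_ne _ hik, hoff k, Ne.symm (Fin.val_ne_of_ne hik)]
  · simpa using hoff k _ (by rw [finSumFinSubEquiv_inr_val]; omega)

theorem IsSmithNormalFormOf.exists_mul_transpose_mul_eq_fromRows {r n : ℕ}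
    {D H : Matrix (Fin r) (Fin n) ℤ} (hD : IsSmithNormalFormOf D H) (hrn : r ≤ n) :
    ∃ (P : Matrix (Fin r ⊕ Fin (n - r)) (Fin n) ℤ) (P' : Matrix (Fin n) (Fin r ⊕ Fin (n - r)) ℤ)
      (Q Q' : Matrix (Fin r) (Fin r) ℤ), P * P' = 1 ∧ P' * P = 1 ∧ Q * Q' = 1 ∧
        P * Hᵀ * Q = fromRows (diagonal fun i => D i (Fin.castLE hrn i)) 0 := by
  obtain ⟨⟨U, U', V, V', -, hU'U, hVV', hV'V, rfl⟩, hoff, -, -⟩ := hD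
  set e := finSumFinSubEquiv hrn
  refine ⟨Vᵀ.submatrix e id, V'ᵀ.submatrix id e, Uᵀ, U'ᵀ, ?_, ?_, ?_, ?_⟩
  · refine (submatrix_mul_equiv Vᵀ V'ᵀ e (Equiv.refl _) e).trans ?_
    rw [← transpose_mul, hV'V, transpose_one, submatrix_one_equiv]
  · refine (submatrix_mul_equiv V'ᵀ Vᵀ id e id).trans ?_
    rw [submatrix_id_id, ← transpose_mul, hVV', transpose_one]
  · rw [← transpose_mul, hU'U, transpose_one]
  · rw [← transpose_submatrix_finSumFinSubEquiv hrn hoff, Matrix.mul_assoc]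
    refine (submatrix_mul_equiv Vᵀ (Hᵀ * Uᵀ) e (Equiv.refl _) id).trans ?_
    simp only [e, transpose_mul, Matrix.mul_assoc]

/-- Homology of the chain complex `ℤ^r → ℤⁿ → ℤ^{r_Z}` with boundary maps `H_Xᵀ` and
`H_Zᵀ`: if the Smith normal form of `H_X` has (positive) diagonal entries `d₁, …, d_r` and
`H_Z` has full row rank with `H_Z H_Xᵀ = 0`, then
`ker(H_Zᵀ)/im(H_Xᵀ) ≅ (⊕ᵢ ℤ_{dᵢ}) ⊕ ℤ^{n-r-r_Z}`. -/
theorem homological_rotor_code_logical_space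
    (r rZ n : ℕ) (hrn : r ≤ n)
    (HX : Matrix (Fin r) (Fin n) ℤ) (HZ : Matrix (Fin rZ) (Fin n) ℤ)
    (h0 : HZ * HXᵀ = 0)
    (hZrank : Function.Injective fun v : Fin rZ → ℤ => Matrix.vecMul v HZ)
    (D : Matrix (Fin r) (Fin n) ℤ) (hD : IsSmithNormalFormOf D HX)
    (d : Fin r → ℕ) (hd : ∀ i : Fin r, (d i : ℤ) = D i (Fin.castLE hrn i))
    (hdpos : ∀ i, 0 < d i) :
    Nonempty
      ((↥(LinearMap.ker (Matrix.mulVecLin HZ)) ⧸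
          Submodule.comap (LinearMap.ker (Matrix.mulVecLin HZ)).subtype
            (LinearMap.range (Matrix.mulVecLin (HXᵀ)))) ≃+
        (((i : Fin r) → ZMod (d i)) × (Fin (n - r - rZ) → ℤ))) := by
  obtain ⟨P, P', Q, Q', hPP', hP'P, hQ, hX⟩ := hD.exists_mul_transpose_mul_eq_fromRows hrn
  simp only [← hd] at hX
  have hZ : HZ * P' = fromCols 0 (HZ * P').toCols₂ := by
    refine eq_fromCols_zero_of_mul_fromRows_diagonal_eq_zero (d := fun i => (d i : ℤ))
      (fun i => by exact_mod_cast (hdpos i).ne') ?_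
    have hK : HZ * P' * (P * HXᵀ * Q) = 0 := calc
      _ = HZ * (P' * P) * HXᵀ * Q := by simp only [Matrix.mul_assoc]
      _ = 0 := by rw [hP'P, Matrix.mul_one, h0, Matrix.zero_mul]
    rwa [hX] at hK
  have hK₂ : Function.Injective fun v : Fin rZ → ℤ => v ᵥ* (HZ * P').toCols₂ :=
    injective_vecMul_of_injective_vecMul_fromCols_zero
      (hZ ▸ injective_vecMul_mul hZrank hP'P)
  exact ⟨((kerModRangeCongr hPP' hP'P hQ hX hZ).trans <|
    (kerModRangeFromRowsFromColsEquiv _ _).trans <|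
      (quotientRangeDiagonalEquivPiZMod d).prodCongr
        (kerMulVecLinEquivOfInjectiveVecMul hK₂)).toAddEquiv⟩
end

section
/- The rotor coherent state |ξ⟩ = Σ_{l∈ℤ} ξ^{-l} e^{-l²/2} |l⟩, for ξ ∈ ℂ \ {0}, is a well-defined (normalizable) vector in ℓ²(ℤ), and satisfies e^{iâ}|ξ⟩ = ξ|ξ⟩ where e^{iâ} = X(1)·e^{-l̂ - 1/2}, with X(1)|l⟩ = |l+1⟩ and e^{-l̂}|l⟩ = e^{-l}|l⟩; moreover e^{-(ln χ) l̂}|ξ⟩ = |χξ⟩ for every χ > 0. -/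
/-!
The coefficients of `|ξ⟩` are exactly the terms `e^{2πilz + πil²τ}` of the Jacobi theta series
with `τ = i/2π` and `z = i log ξ / 2π`. Since `Im τ > 0` they are absolutely summable, so `|ξ⟩`
lies in `ℓ¹(ℤ) ⊆ ℓ²(ℤ)`. The eigenvalue equation is coefficientwise completion of the square:
`e^{-(l-1) - 1/2} e^{-(l-1)²/2} = e^{-l²/2}`.
-/

/-- The rotor coherent state `|ξ⟩ = Σ_{l∈ℤ} ξ^{-l} e^{-l²/2} |l⟩` as a function on the
momentum basis `{|l⟩ : l ∈ ℤ}` of `ℓ²(ℤ)`. -/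
noncomputable def rotorCoherent (ξ : ℂ) : ℤ → ℂ :=
  fun l => ξ ^ (-l) * Complex.exp (-((l : ℂ) ^ 2) / 2)

/-- The shift `X(1)`: `X(1)|l⟩ = |l+1⟩`. -/
def rotorShiftOne (f : ℤ → ℂ) : ℤ → ℂ := fun l => f (l - 1)

open Complex
open scoped Real

lemma rotorCoherent_eq_jacobiTheta₂_term {ξ : ℂ} (hξ : ξ ≠ 0) (l : ℤ) :
    rotorCoherent ξ l = jacobiTheta₂_term l (I * log ξ / (2 * π)) (I / (2 * π)) := by
  have hexponent : 2 * π * I * l * (I * log ξ / (2 * π)) + π * I * l ^ 2 * (I / (2 * π))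
      = (-l : ℤ) * log ξ + -((l : ℂ) ^ 2) / 2 := by
    field_simp
    push_cast
    linear_combination (2 * l * log ξ + l ^ 2) * I_sq
  rw [rotorCoherent, jacobiTheta₂_term, hexponent, exp_add, exp_int_mul, exp_log hξ]

lemma summable_rotorCoherent {ξ : ℂ} (hξ : ξ ≠ 0) : Summable (rotorCoherent ξ) := by
  have him : 0 < (I / (2 * π)).im := by simp [div_im, Real.pi_pos]
  exact ((summable_jacobiTheta₂_term_iff _ _).2 him).congr
    fun l => (rotorCoherent_eq_jacobiTheta₂_term hξ l).symm

lemma memℓp_rotorCoherent {ξ : ℂ} (hξ : ξ ≠ 0) {p : ENNReal} (hp : 1 ≤ p) :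
    Memℓp (rotorCoherent ξ) p := by
  have hone : Memℓp (rotorCoherent ξ) 1 :=
    memℓp_gen (by simpa using summable_norm_iff.2 (summable_rotorCoherent hξ))
  exact hone.of_exponent_ge hp

lemma rotorShiftOne_exp_mul_rotorCoherent {ξ : ℂ} (hξ : ξ ≠ 0) :
    rotorShiftOne (fun l => exp (-(l : ℂ) - 1 / 2) * rotorCoherent ξ l) = ξ • rotorCoherent ξ := by
  funext l
  have hpow : ξ ^ (-(l - 1)) = ξ * ξ ^ (-l) := by
    rw [show -(l - 1) = 1 + -l by ring, zpow_add₀ hξ, zpow_one]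
  have hgauss : exp (-((l - 1 : ℤ) : ℂ) - 1 / 2) * exp (-(((l - 1 : ℤ) : ℂ) ^ 2) / 2)
      = exp (-((l : ℂ) ^ 2) / 2) := by
    rw [← exp_add]
    push_cast
    ring_nf
  simp only [rotorShiftOne, rotorCoherent, Pi.smul_apply, smul_eq_mul, hpow]
  linear_combination ξ * ξ ^ (-l) * hgauss

lemma zpow_neg_mul_rotorCoherent (c ξ : ℂ) :
    (fun l : ℤ => c ^ (-l) * rotorCoherent ξ l) = rotorCoherent (c * ξ) := by
  funext l
  simp only [rotorCoherent, mul_zpow, mul_assoc]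

/-- For every `ξ ∈ ℂ \ {0}` the rotor coherent state `|ξ⟩` is a well-defined
(normalizable) vector of `ℓ²(ℤ)`, it is an eigenvector of `e^{iâ} = X(1)·e^{-l̂-1/2}`
with eigenvalue `ξ`, and `e^{-(ln χ)l̂}|ξ⟩ = |χξ⟩` for every `χ > 0`. -/
theorem rotor_coherent_state_properties (ξ : ℂ) (hξ : ξ ≠ 0) :
    Memℓp (rotorCoherent ξ) 2 ∧
    rotorShiftOne (fun l => Complex.exp (-(l : ℂ) - 1 / 2) * rotorCoherent ξ l)
      = ξ • rotorCoherent ξ ∧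
    ∀ χ : ℝ, 0 < χ →
      (fun l : ℤ => (χ : ℂ) ^ (-l) * rotorCoherent ξ l) = rotorCoherent (χ * ξ) :=
  ⟨memℓp_rotorCoherent hξ one_le_two, rotorShiftOne_exp_mul_rotorCoherent hξ,
    fun χ _ => zpow_neg_mul_rotorCoherent χ ξ⟩
end
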